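/- Let φ : ℝ⁵ → ℝ be C³ and assume that the function L₁(Ā₁) − L̄₁(A₁) vanishes nowhere on ℝ⁵. Set k := −( L₂(Ā₁) − L̄₁(A₂) ) / ( L₁(Ā₁) − L̄₁(A₁) ), and define the operators K f := k·(L₁ f) + L₂ f and K̄ f := conj(k)·(L̄₁ f) + L̄₂ f. If there exist functions g₁, g₂ : ℝ⁵ → ℂ such that [K, K̄] f = g₁·(K f) + g₂·(K̄ f) for every smooth f : ℝ⁵ → ℂ, then K(conj k) = 0 and K̄(k) = 0 identically on ℝ⁵, and [K, K̄] f = 0 for every smooth f. (This is the paper's derivation that the Levi-kernel fields of a General Class IV₂ manifold satisfy [K, K̄] = 0, 0 ≡ K(k̄), 0 ≡ K̄(k).) -/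

import Mathlib

noncomputable section
open Complex ComplexConjugate

/-- Points of `ℝ⁵`, with coordinates `(x₁, y₁, x₂, y₂, u)`, `z₁ = x₁ + i y₁`,
`z₂ = x₂ + i y₂`. -/
abbrev V5 := Fin 5 → ℝ

/-- Partial derivative in the `j`-th coordinate direction. -/
def pd (j : Fin 5) (f : V5 → ℂ) : V5 → ℂ := fun p => fderiv ℝ f p (Pi.single j 1)

/-- Wirtinger derivative `f_{z₁} := (f_{x₁} − i f_{y₁})/2`. -/
def wz1 (f : V5 → ℂ) : V5 → ℂ := fun p => (pd 0 f p - I * pd 1 f p) / 2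

/-- Wirtinger derivative `f_{z̄₁} := (f_{x₁} + i f_{y₁})/2`. -/
def wzb1 (f : V5 → ℂ) : V5 → ℂ := fun p => (pd 0 f p + I * pd 1 f p) / 2

/-- Wirtinger derivative `f_{z₂} := (f_{x₂} − i f_{y₂})/2`. -/
def wz2 (f : V5 → ℂ) : V5 → ℂ := fun p => (pd 2 f p - I * pd 3 f p) / 2

/-- Wirtinger derivative `f_{z̄₂} := (f_{x₂} + i f_{y₂})/2`. -/
def wzb2 (f : V5 → ℂ) : V5 → ℂ := fun p => (pd 2 f p + I * pd 3 f p) / 2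

/-- Partial derivative `f_u`. -/
def du (f : V5 → ℂ) : V5 → ℂ := pd 4 f

/-- Complexification of a real-valued function. -/
def cl (φ : V5 → ℝ) : V5 → ℂ := fun p => (φ p : ℂ)

variable (φ : V5 → ℝ)

/-- The coefficient `A₁ := −φ_{z₁}/(i + φ_u)`. -/
def A1 : V5 → ℂ := fun p => -(wz1 (cl φ) p) / (I + du (cl φ) p)

/-- The coefficient `A₂ := −φ_{z₂}/(i + φ_u)`. -/
def A2 : V5 → ℂ := fun p => -(wz2 (cl φ) p) / (I + du (cl φ) p)

/-- The operator `L₁ f := f_{z₁} + A₁ f_u`. -/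
def L1 (f : V5 → ℂ) : V5 → ℂ := fun p => wz1 f p + A1 φ p * du f p

/-- The operator `L₂ f := f_{z₂} + A₂ f_u`. -/
def L2 (f : V5 → ℂ) : V5 → ℂ := fun p => wz2 f p + A2 φ p * du f p

/-- The conjugate operator `L̄₁ f := f_{z̄₁} + Ā₁ f_u`. -/
def Lb1 (f : V5 → ℂ) : V5 → ℂ := fun p => wzb1 f p + conj (A1 φ p) * du f p

/-- The conjugate operator `L̄₂ f := f_{z̄₂} + Ā₂ f_u`. -/
def Lb2 (f : V5 → ℂ) : V5 → ℂ := fun p => wzb2 f p + conj (A2 φ p) * du f p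

/-- The fundamental function `k := −( L₂(Ā₁) − L̄₁(A₂) ) / ( L₁(Ā₁) − L̄₁(A₁) )`. -/
def kf : V5 → ℂ := fun p =>
  -(L2 φ (fun q => conj (A1 φ q)) p - Lb1 φ (A2 φ) p)
    / (L1 φ (fun q => conj (A1 φ q)) p - Lb1 φ (A1 φ) p)

/-- The Levi-kernel field `K f := k·(L₁ f) + L₂ f`. -/
def Kof (f : V5 → ℂ) : V5 → ℂ := fun p => kf φ p * L1 φ f p + L2 φ f p

/-- The conjugate Levi-kernel field `K̄ f := k̄·(L̄₁ f) + L̄₂ f`. -/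
def Kbof (f : V5 → ℂ) : V5 → ℂ := fun p => conj (kf φ p) * Lb1 φ f p + Lb2 φ f p

/-!
Testing the bracket relation on the linear coordinates `z₁, z̄₁, z₂, z̄₂` decides everything.
`K` and `K̄` send each of these to a constant or to `k`, `k̄`: `K z₂ = 1`, `K̄ z₂ = 0`,
`K z₁ = k`, `K̄ z₁ = 0`, and conjugately. Since `K` and `K̄` kill constants, `z₂` and `z̄₂` force
`g₁ = g₂ = 0`, after which `[K, K̄] z̄₁ = K(k̄)` and `[K, K̄] z₁ = −K̄(k)` must vanish.
-/

lemma pd_const (c : ℂ) (j : Fin 5) (p : V5) : pd j (fun _ => c) p = 0 := by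
  simp [pd]

lemma pd_continuousLinearMap (ℓ : V5 →L[ℝ] ℂ) (j : Fin 5) (p : V5) :
    pd j ℓ p = ℓ (Pi.single j 1) := by
  simp [pd, ContinuousLinearMap.fderiv]

lemma Kof_const (c : ℂ) : Kof φ (fun _ => c) = 0 := by
  funext p
  simp [Kof, L1, L2, wz1, wz2, du, pd_const]

lemma Kbof_const (c : ℂ) : Kbof φ (fun _ => c) = 0 := by
  funext p
  simp [Kbof, Lb1, Lb2, wzb1, wzb2, du, pd_const]

def coordComb (m n : Fin 5) (b : ℂ) : V5 →L[ℝ] ℂ :=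
  ofRealCLM.comp (ContinuousLinearMap.proj m) + b • ofRealCLM.comp (ContinuousLinearMap.proj n)

@[simp]
lemma coordComb_apply (m n : Fin 5) (b : ℂ) (q : V5) :
    coordComb m n b q = q m + b * q n := by
  simp [coordComb]

lemma contDiff_coordComb (m n : Fin 5) (b : ℂ) : ContDiff ℝ (⊤ : ℕ∞) (coordComb m n b) :=
  (coordComb m n b).contDiff

section Coordinates

local notation "z₁" => coordComb 0 1 I
local notation "zb₁" => coordComb 0 1 (-I)
local notation "z₂" => coordComb 2 3 I
local notation "zb₂" => coordComb 2 3 (-I)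

lemma Kof_z₁ : Kof φ z₁ = kf φ := by
  funext p
  simp [Kof, L1, L2, wz1, wz2, du, pd_continuousLinearMap]

lemma Kbof_z₁ : Kbof φ z₁ = fun _ => 0 := by
  funext p
  simp [Kbof, Lb1, Lb2, wzb1, wzb2, du, pd_continuousLinearMap]

lemma Kof_zb₁ : Kof φ zb₁ = fun _ => 0 := by
  funext p
  simp [Kof, L1, L2, wz1, wz2, du, pd_continuousLinearMap]

lemma Kbof_zb₁ : Kbof φ zb₁ = fun p => conj (kf φ p) := by
  funext p
  simp [Kbof, Lb1, Lb2, wzb1, wzb2, du, pd_continuousLinearMap]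

lemma Kof_z₂ : Kof φ z₂ = fun _ => 1 := by
  funext p
  simp [Kof, L1, L2, wz1, wz2, du, pd_continuousLinearMap]

lemma Kbof_z₂ : Kbof φ z₂ = fun _ => 0 := by
  funext p
  simp [Kbof, Lb1, Lb2, wzb1, wzb2, du, pd_continuousLinearMap]

lemma Kof_zb₂ : Kof φ zb₂ = fun _ => 0 := by
  funext p
  simp [Kof, L1, L2, wz1, wz2, du, pd_continuousLinearMap]

lemma Kbof_zb₂ : Kbof φ zb₂ = fun _ => 1 := by
  funext p
  simp [Kbof, Lb1, Lb2, wzb1, wzb2, du, pd_continuousLinearMap]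

lemma bracket_coeffs_eq_zero {g₁ g₂ : V5 → ℂ}
    (hg : ∀ f : V5 → ℂ, ContDiff ℝ (⊤ : ℕ∞) f → ∀ p,
      Kof φ (Kbof φ f) p - Kbof φ (Kof φ f) p = g₁ p * Kof φ f p + g₂ p * Kbof φ f p) :
    g₁ = 0 ∧ g₂ = 0 := by
  constructor <;> funext p
  · simpa [Kof_z₂, Kbof_z₂, Kof_const, Kbof_const] using
      (hg _ (contDiff_coordComb 2 3 I) p).symm
  · simpa [Kof_zb₂, Kbof_zb₂, Kof_const, Kbof_const] using
      (hg _ (contDiff_coordComb 2 3 (-I)) p).symm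

end Coordinates

theorem class_IV₂_kernel_bracket_vanishes
    (hbr : ∃ g₁ g₂ : V5 → ℂ, ∀ f : V5 → ℂ, ContDiff ℝ (⊤ : ℕ∞) f → ∀ p,
        Kof φ (Kbof φ f) p - Kbof φ (Kof φ f) p = g₁ p * Kof φ f p + g₂ p * Kbof φ f p) :
    (∀ p, Kof φ (fun q => conj (kf φ q)) p = 0) ∧
    (∀ p, Kbof φ (kf φ) p = 0) ∧
    (∀ f : V5 → ℂ, ContDiff ℝ (⊤ : ℕ∞) f → ∀ p,
        Kof φ (Kbof φ f) p - Kbof φ (Kof φ f) p = 0) := by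
  obtain ⟨g₁, g₂, hg⟩ := hbr
  obtain ⟨rfl, rfl⟩ := bracket_coeffs_eq_zero φ hg
  replace hg : ∀ f : V5 → ℂ, ContDiff ℝ (⊤ : ℕ∞) f → ∀ p,
      Kof φ (Kbof φ f) p - Kbof φ (Kof φ f) p = 0 := by simpa using hg
  refine ⟨fun p => ?_, fun p => ?_, hg⟩
  · simpa [Kof_zb₁, Kbof_zb₁, Kof_const, Kbof_const] using
      hg _ (contDiff_coordComb 0 1 (-I)) p
  · simpa [Kof_z₁, Kbof_z₁, Kof_const, Kbof_const] using hg _ (contDiff_coordComb 0 1 I) p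

end
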